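/- For any real positive-definite 2n×2n covariance matrix Γ with symplectic eigenvalues ν₁,…,νₙ (each counted once), the Gaussian extractable work W(Γ) = (1/2)(Tr[Γ] − 2∑ᵢνᵢ) is nonnegative; i.e., the trace of Γ is at least twice the sum of its symplectic eigenvalues. -/

import Mathlib

/-!
Write the complexified covariance matrix as `Γ = Sᴴ S`. Then `iΩΓ = (iΩ Sᴴ) S` has the same
characteristic polynomial as the Hermitian matrix `H = S (iΩ) Sᴴ`, and `iΩ` is a Hermitian
unitary. For a unit eigenvector `v` of `H` with eigenvalue `λ`, Cauchy–Schwarz gives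
`|λ| = |⟪Sᴴ v, iΩ Sᴴ v⟫| ≤ ‖Sᴴ v‖² = ⟪v, S Sᴴ v⟫`, and summing over an orthonormal eigenbasis
yields `∑ |λ| ≤ tr (S Sᴴ) = tr Γ`. Since the eigenvalues are `±νᵢ`, the left side is
`2 ∑ |νᵢ| ≥ 2 ∑ νᵢ`.
-/

open Matrix

/-- The standard symplectic form Ω = [[0, Iₙ],[−Iₙ, 0]] on ℝ^{2n}. -/
noncomputable def Omega (n : ℕ) : Matrix (Fin n ⊕ Fin n) (Fin n ⊕ Fin n) ℝ :=
  Matrix.fromBlocks 0 1 (-1) 0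

open scoped InnerProductSpace MatrixOrder ComplexOrder
open WithLp

namespace Matrix

section RCLike

variable {𝕜 n : Type*} [RCLike 𝕜] [Fintype n]

lemma star_dotProduct_conjTranspose_mul_mul_mulVec (S M : Matrix n n 𝕜) (v : n → 𝕜) :
    star v ⬝ᵥ (Sᴴ * M * S) *ᵥ v = star (S *ᵥ v) ⬝ᵥ M *ᵥ (S *ᵥ v) := by
  rw [star_mulVec, ← dotProduct_mulVec, ← mulVec_mulVec, ← mulVec_mulVec, dotProduct_mulVec]

variable [DecidableEq n]

lemma norm_star_dotProduct_mulVec_le {B : Matrix n n 𝕜} (hB : Bᴴ * B = 1) (w : n → 𝕜) :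
    ‖star w ⬝ᵥ B *ᵥ w‖ ≤ RCLike.re (star w ⬝ᵥ w) := by
  have inner_eq (u v : n → 𝕜) : ⟪toLp 2 u, toLp 2 v⟫_𝕜 = star u ⬝ᵥ v := dotProduct_comm _ _
  have hnorm : ‖toLp 2 (B *ᵥ w)‖ = ‖toLp 2 w‖ := by
    rw [norm_eq_sqrt_re_inner (𝕜 := 𝕜), norm_eq_sqrt_re_inner (𝕜 := 𝕜), inner_eq, inner_eq,
      star_mulVec, ← dotProduct_mulVec, mulVec_mulVec, hB, one_mulVec]
  calc ‖star w ⬝ᵥ B *ᵥ w‖ = ‖⟪toLp 2 w, toLp 2 (B *ᵥ w)⟫_𝕜‖ := by rw [inner_eq]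
    _ ≤ ‖toLp 2 w‖ * ‖toLp 2 (B *ᵥ w)‖ := norm_inner_le_norm _ _
    _ = RCLike.re (star w ⬝ᵥ w) := by rw [hnorm, ← inner_self_eq_norm_mul_norm (𝕜 := 𝕜), inner_eq]

lemma sum_star_dotProduct_mulVec_orthonormalBasis
    (b : OrthonormalBasis n 𝕜 (EuclideanSpace 𝕜 n)) (M : Matrix n n 𝕜) :
    ∑ i, star ⇑(b i) ⬝ᵥ M *ᵥ ⇑(b i) = M.trace := by
  rw [← M.trace_toLin_eq (PiLp.basisFun 2 𝕜 n), ← toLpLin_eq_toLin,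
    LinearMap.trace_eq_sum_inner _ b]
  exact Finset.sum_congr rfl fun i _ => dotProduct_comm _ _

lemma IsHermitian.sum_abs_eigenvalues_le {H S B : Matrix n n 𝕜} (hH : H.IsHermitian)
    (hHSB : H = Sᴴ * B * S) (hB : Bᴴ * B = 1) :
    ∑ i, |hH.eigenvalues i| ≤ RCLike.re (Sᴴ * S).trace := by
  rw [← sum_star_dotProduct_mulVec_orthonormalBasis hH.eigenvectorBasis, map_sum]
  refine Finset.sum_le_sum fun i _ => ?_
  set v := ⇑(hH.eigenvectorBasis i)
  calc |hH.eigenvalues i| ≤ ‖star v ⬝ᵥ H *ᵥ v‖ := by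
        rw [hH.eigenvalues_eq]; exact RCLike.abs_re_le_norm _
    _ = ‖star (S *ᵥ v) ⬝ᵥ B *ᵥ (S *ᵥ v)‖ := by
        rw [hHSB, star_dotProduct_conjTranspose_mul_mul_mulVec]
    _ ≤ RCLike.re (star (S *ᵥ v) ⬝ᵥ (S *ᵥ v)) := norm_star_dotProduct_mulVec_le hB _
    _ = RCLike.re (star v ⬝ᵥ (Sᴴ * S) *ᵥ v) := by
        rw [← mul_one Sᴴ, star_dotProduct_conjTranspose_mul_mul_mulVec, one_mulVec]

lemma sum_norm_roots_charpoly_mul_le {B P : Matrix n n 𝕜} (hB : B.IsHermitian) (hBB : B * B = 1)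
    (hP : P.PosSemidef) :
    ((B * P).charpoly.roots.map (‖·‖)).sum ≤ RCLike.re P.trace := by
  obtain ⟨S, rfl⟩ := CStarAlgebra.nonneg_iff_eq_star_mul_self.mp hP.nonneg
  have hH : (S * B * Sᴴ).IsHermitian := by
    simpa using isHermitian_conjTranspose_mul_mul Sᴴ hB
  have hbound := hH.sum_abs_eigenvalues_le (by rw [conjTranspose_conjTranspose])
    (by rw [hB.eq, hBB])
  rw [conjTranspose_conjTranspose] at hbound
  rw [star_eq_conjTranspose, ← mul_assoc, charpoly_mul_comm, ← mul_assoc,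
    hH.roots_charpoly_eq_eigenvalues, trace_mul_comm]
  simpa only [Multiset.map_map, ← Finset.sum_eq_multiset_sum, Function.comp_apply,
    RCLike.norm_ofReal] using hbound

end RCLike

section Complexification

variable {n : Type*}

lemma map_ofReal_mul [Fintype n] (A B : Matrix n n ℝ) :
    (A * B).map ((↑) : ℝ → ℂ) = A.map (↑) * B.map (↑) :=
  Matrix.map_mul (f := Complex.ofRealHom)

lemma conjTranspose_map_ofReal (A : Matrix n n ℝ) : (A.map ((↑) : ℝ → ℂ))ᴴ = Aᵀ.map (↑) := by
  ext i j
  simp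

lemma PosSemidef.map_ofReal [Fintype n] [DecidableEq n] {A : Matrix n n ℝ} (hA : A.PosSemidef) :
    (A.map ((↑) : ℝ → ℂ)).PosSemidef := by
  obtain ⟨R, rfl⟩ := CStarAlgebra.nonneg_iff_eq_star_mul_self.mp hA.nonneg
  rw [map_ofReal_mul, star_eq_conjTranspose, conjTranspose_eq_transpose_of_trivial,
    ← conjTranspose_map_ofReal]
  exact posSemidef_conjTranspose_mul_self _

lemma isHermitian_I_smul_map_ofReal {J : Matrix n n ℝ} (hJ : Jᵀ = -J) :
    (Complex.I • J.map ((↑) : ℝ → ℂ)).IsHermitian := by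
  rw [IsHermitian, conjTranspose_smul, conjTranspose_map_ofReal, hJ]
  ext i j
  simp

lemma I_smul_map_ofReal_mul_self [Fintype n] [DecidableEq n] {J : Matrix n n ℝ} (hJ : J * J = -1) :
    (Complex.I • J.map ((↑) : ℝ → ℂ)) * (Complex.I • J.map ((↑) : ℝ → ℂ)) = 1 := by
  rw [smul_mul_smul, Complex.I_mul_I, ← map_ofReal_mul, hJ]
  ext i j
  simp [one_apply, apply_ite]

end Complexification

end Matrix

lemma Omega_transpose (n : ℕ) : (Omega n)ᵀ = -Omega n := by
  simp [Omega, fromBlocks_transpose, fromBlocks_neg]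

lemma Omega_mul_self (n : ℕ) : Omega n * Omega n = -1 := by
  simp [Omega, fromBlocks_multiply, ← fromBlocks_one, fromBlocks_neg]

theorem gaussian_work_nonneg_general (n : ℕ)
    (Γ : Matrix (Fin n ⊕ Fin n) (Fin n ⊕ Fin n) ℝ)
    (hpd : Γ.PosDef)
    (ν : Fin n → ℝ)
    (hroots : ((Complex.I • ((Omega n * Γ).map (fun x : ℝ => (x : ℂ)))).charpoly).roots
      = (Finset.univ.val.map fun i : Fin n => ((ν i : ℝ) : ℂ))
        + (Finset.univ.val.map fun i : Fin n => (-(ν i : ℝ) : ℂ))) :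
    0 ≤ (1 / 2 : ℝ) * (Γ.trace - 2 * ∑ i, ν i) := by
  have hbound := sum_norm_roots_charpoly_mul_le (isHermitian_I_smul_map_ofReal (Omega_transpose n))
    (I_smul_map_ofReal_mul_self (Omega_mul_self n)) hpd.posSemidef.map_ofReal
  have htrace : RCLike.re (Γ.map ((↑) : ℝ → ℂ)).trace = Γ.trace := by simp [trace]
  rw [smul_mul_assoc, ← map_ofReal_mul, hroots, htrace] at hbound
  simp only [Multiset.map_add, Multiset.sum_add, Multiset.map_map, ← Finset.sum_eq_multiset_sum,
    Function.comp_apply, norm_neg, Complex.norm_real, Real.norm_eq_abs] at hbound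
  have habs : ∑ i, ν i ≤ ∑ i, |ν i| := Finset.sum_le_sum fun i _ => le_abs_self (ν i)
  linarith

/-- For any real positive-definite 2n×2n covariance matrix Γ with
symplectic eigenvalues ν₁,…,νₙ (i.e. the eigenvalues of iΩΓ, with multiplicity,
are ±ν₁,…,±νₙ), the Gaussian extractable work (1/2)(Tr Γ − 2∑ν) is nonnegative. -/
theorem gaussian_work_nonneg (n : ℕ)
    (Γ : Matrix (Fin n ⊕ Fin n) (Fin n ⊕ Fin n) ℝ)
    (hsym : Γ.IsHermitian) (hpd : Γ.PosDef)
    (ν : Fin n → ℝ) (hν : ∀ i, 0 < ν i)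
    (hroots : ((Complex.I • ((Omega n * Γ).map (fun x : ℝ => (x : ℂ)))).charpoly).roots
      = (Finset.univ.val.map fun i : Fin n => ((ν i : ℝ) : ℂ))
        + (Finset.univ.val.map fun i : Fin n => (-(ν i : ℝ) : ℂ))) :
    0 ≤ (1 / 2 : ℝ) * (Γ.trace - 2 * ∑ i, ν i) :=
  gaussian_work_nonneg_general n Γ hpd ν hroots
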